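/- Let ρ and σ be positive semidefinite operators on a finite-dimensional Hilbert space. The function s ↦ tr⁺[σ s − ρ] on the nonnegative reals is convex and monotonically nondecreasing. -/

import Mathlib

open Matrix
open scoped ComplexOrder

/-- Trace of the positive part, via the variational formula
`tr⁺[M] = sup { Re tr[P M] : 0 ≤ P ≤ I }`. -/
noncomputable def trPos {n : Type*} [Fintype n] [DecidableEq n] (M : Matrix n n ℂ) : ℝ :=
  sSup {x : ℝ | ∃ P : Matrix n n ℂ, P.PosSemidef ∧ ((1 : Matrix n n ℂ) - P).PosSemidef ∧
    x = (Matrix.trace (P * M)).re}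

lemma myTrace_re_nonneg {n : Type*} [Fintype n] [DecidableEq n] {Q : Matrix n n ℂ} (hQ : Q.PosSemidef) :
    0 ≤ (Matrix.trace Q).re := by
  have h : (Matrix.trace Q).re = ∑ i, (Q i i).re := by
    simp [Matrix.trace, Matrix.diag, Complex.re_sum]
  rw [h]
  refine Finset.sum_nonneg fun i _ => ?_
  have := hQ.re_dotProduct_nonneg (Pi.single i 1)
  simpa [dotProduct, mulVec, Pi.single_apply, Finset.sum_ite_eq] using this

open scoped MatrixOrder in
lemma myTrace_mul_re_nonneg {n : Type*} [Fintype n] [DecidableEq n] {P M : Matrix n n ℂ}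
    (hP : P.PosSemidef) (hM : M.PosSemidef) : 0 ≤ (Matrix.trace (P * M)).re := by
  have h1 : P * M = CFC.sqrt P * (CFC.sqrt P * M) := by
    rw [← mul_assoc, CFC.sqrt_mul_sqrt_self P hP.nonneg]
  have h2 : Matrix.trace (P * M) = Matrix.trace ((CFC.sqrt P)ᴴ * M * CFC.sqrt P) := by
    rw [h1, Matrix.trace_mul_comm, (CFC.sqrt_nonneg P).posSemidef.isHermitian.eq, mul_assoc]
  rw [h2]
  exact myTrace_re_nonneg (hM.conjTranspose_mul_mul_same _)


lemma trace_mul_smul_sub_re {n : Type*} [Fintype n] [DecidableEq n] (P ρ σ : Matrix n n ℂ) (s : ℝ) :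
    (Matrix.trace (P * (s • σ - ρ))).re
      = s * (Matrix.trace (P * σ)).re - (Matrix.trace (P * ρ)).re := by
  simp [mul_sub, Matrix.mul_smul, Complex.real_smul]

lemma trace_mul_sigma_le {n : Type*} [Fintype n] [DecidableEq n] (P σ : Matrix n n ℂ) (h1P : ((1 : Matrix n n ℂ) - P).PosSemidef)
    (hσ : σ.PosSemidef) : (Matrix.trace (P * σ)).re ≤ (Matrix.trace σ).re := by
  have h := myTrace_mul_re_nonneg h1P hσ
  simp only [sub_mul, one_mul, Matrix.trace_sub, Complex.sub_re] at h
  linarith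

/-- for positive semidefinite ρ, σ, the map s ↦ tr⁺[σ s − ρ] is convex and
monotonically nondecreasing on the nonnegative reals. -/
theorem trPos_convexOn_and_monotoneOn {n : Type*} [Fintype n] [DecidableEq n]
    (ρ σ : Matrix n n ℂ) (hρ : ρ.PosSemidef) (hσ : σ.PosSemidef) :
    ConvexOn ℝ (Set.Ici (0 : ℝ)) (fun s : ℝ => trPos (s • σ - ρ)) ∧
    MonotoneOn (fun s : ℝ => trPos (s • σ - ρ)) (Set.Ici (0 : ℝ)) := by
  set S : ℝ → Set ℝ := fun s => {x : ℝ | ∃ P : Matrix n n ℂ, P.PosSemidef ∧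
      ((1 : Matrix n n ℂ) - P).PosSemidef ∧ x = (Matrix.trace (P * (s • σ - ρ))).re} with hS
  have htr : ∀ s : ℝ, trPos (s • σ - ρ) = sSup (S s) := fun s => rfl
  have hmem : ∀ (s : ℝ) (P : Matrix n n ℂ), P.PosSemidef →
      ((1 : Matrix n n ℂ) - P).PosSemidef →
      s * (Matrix.trace (P * σ)).re - (Matrix.trace (P * ρ)).re ∈ S s := by
    intro s P hP h1P
    exact ⟨P, hP, h1P, (trace_mul_smul_sub_re P ρ σ s).symm⟩
  have hne : ∀ s : ℝ, (S s).Nonempty := by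
    intro s
    refine ⟨_, hmem s 0 Matrix.PosSemidef.zero ?_⟩
    simpa using (Matrix.PosSemidef.one (n := n) (R := ℂ))
  have hbdd : ∀ s : ℝ, 0 ≤ s → BddAbove (S s) := by
    intro s hs
    refine ⟨s * (Matrix.trace σ).re, ?_⟩
    rintro x ⟨P, hP, h1P, rfl⟩
    rw [trace_mul_smul_sub_re]
    have h1 : 0 ≤ (Matrix.trace (P * ρ)).re := myTrace_mul_re_nonneg hP hρ
    have h2 : (Matrix.trace (P * σ)).re ≤ (Matrix.trace σ).re :=
      trace_mul_sigma_le P σ h1P hσ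
    nlinarith
  constructor
  · refine ⟨convex_Ici 0, ?_⟩
    intro s hs t ht a b ha hb hab
    simp only [htr]
    refine csSup_le (hne _) ?_
    rintro x ⟨P, hP, h1P, rfl⟩
    rw [trace_mul_smul_sub_re]
    have hsle : s * (Matrix.trace (P * σ)).re - (Matrix.trace (P * ρ)).re ≤ sSup (S s) :=
      le_csSup (hbdd s hs) (hmem s P hP h1P)
    have htle : t * (Matrix.trace (P * σ)).re - (Matrix.trace (P * ρ)).re ≤ sSup (S t) :=
      le_csSup (hbdd t ht) (hmem t P hP h1P)
    have h1 := mul_le_mul_of_nonneg_left hsle ha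
    have h2 := mul_le_mul_of_nonneg_left htle hb
    have key : (a • s + b • t) * (Matrix.trace (P * σ)).re - (Matrix.trace (P * ρ)).re
        = a * (s * (Matrix.trace (P * σ)).re - (Matrix.trace (P * ρ)).re)
          + b * (t * (Matrix.trace (P * σ)).re - (Matrix.trace (P * ρ)).re) := by
      simp only [smul_eq_mul]
      linear_combination ((Matrix.trace (P * ρ)).re) * hab
    rw [key]
    simp only [smul_eq_mul]
    linarith
  · intro s hs t ht hst
    simp only [htr]
    refine csSup_le (hne _) ?_
    rintro x ⟨P, hP, h1P, rfl⟩
    rw [trace_mul_smul_sub_re]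
    have ha : 0 ≤ (Matrix.trace (P * σ)).re := myTrace_mul_re_nonneg hP hσ
    have := le_csSup (hbdd t ht) (hmem t P hP h1P)
    nlinarith
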